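/- Let d ≥ 2, n ≥ 2, let ω : ℝ → ℝ^d be C^1, let k_2, …, k_n ∈ ℤ^{d−1} and let φ_2, …, φ_n : ℝ → ℝ be C^1. Define H_n(θ, r) = ⟨ω(r_d), r⟩ − Σ_{j=2}^n φ_j(r_d) sin(2π⟨k_j, θ̃⟩). Fix (θ_0, r_0) ∈ ℝ^d × ℝ^d and set s = (r_0)_d. Then the solution of Hamilton's equations for H_n with initial condition (θ_0, r_0) is defined for all t ∈ ℝ and satisfies: θ̃(t) = θ̃_0 + t ω̃(s), r_d(t) = s, and r̃(t) = r̃_0 + Σ_{j=2}^n φ_j(s) ψ_j(t) k_j, where ψ_j(t) = [sin(2π⟨k_j, θ̃_0⟩ + 2πt⟨ω̃(s), k_j⟩) − sin(2π⟨k_j, θ̃_0⟩)] / ⟨ω̃(s), k_j⟩ if ⟨ω̃(s), k_j⟩ ≠ 0, and ψ_j(t) = 2πt cos(2π⟨k_j, θ̃_0⟩) if ⟨ω̃(s), k_j⟩ = 0. -/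

import Mathlib

open Real Filter Set

noncomputable section

/-- The phase space `T^d × ℝ^d`, realized as pairs `(θ, r)` of functions `Fin d → ℝ`. -/
abbrev Phase (d : ℕ) := (Fin d → ℝ) × (Fin d → ℝ)

/-- `H` is `ℤ^d`-periodic in the angle variable `θ`. -/
def PeriodicTheta {d : ℕ} (H : Phase d → ℝ) : Prop :=
  ∀ (θ r : Fin d → ℝ) (m : Fin d → ℤ), H (fun i => θ i + (m i : ℝ), r) = H (θ, r)

/-- `H` is real entire: it is the restriction to `ℝ^d × ℝ^d` of a holomorphic
function on `ℂ^d × ℂ^d`. -/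
def RealEntire {d : ℕ} (H : Phase d → ℝ) : Prop :=
  ∃ F : (Fin d → ℂ) × (Fin d → ℂ) → ℂ, Differentiable ℂ F ∧
    ∀ θ r : Fin d → ℝ, F (fun i => (θ i : ℂ), fun i => (r i : ℂ)) = H (θ, r)

/-- `H` is of the form `(*)` with frequency `ω`:
`|H(θ,r) − ⟨ω,r⟩| ≤ C‖r‖²` for all `θ` and all `‖r‖ ≤ δ`. -/
def FormStar {d : ℕ} (H : Phase d → ℝ) (ω : Fin d → ℝ) : Prop :=
  ∃ C δ : ℝ, 0 < C ∧ 0 < δ ∧ ∀ θ r : Fin d → ℝ, ‖r‖ ≤ δ →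
    |H (θ, r) - ∑ i, ω i * r i| ≤ C * ‖r‖ ^ 2

/-- `(θ, r)` is a solution of Hamilton's equations for `H` on the set `J`:
`θ' = ∂H/∂r`, `r' = −∂H/∂θ`. -/
def IsSolutionOn {d : ℕ} (H : Phase d → ℝ) (θ r : ℝ → Fin d → ℝ) (J : Set ℝ) : Prop :=
  ∀ t ∈ J, ∀ i : Fin d,
    HasDerivWithinAt (fun u => θ u i) (fderiv ℝ H (θ t, r t) (0, Pi.single i 1)) J t ∧
    HasDerivWithinAt (fun u => r u i) (-(fderiv ℝ H (θ t, r t) (Pi.single i 1, 0))) J t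

/-- Embedding of the first `d − 1` indices into `Fin d`. -/
def emb (d : ℕ) : Fin (d - 1) → Fin d := Fin.castLE (Nat.sub_le d 1)

/-- The last index of `Fin d`. -/
def lst (d : ℕ) (hd : 0 < d) : Fin d := ⟨d - 1, Nat.sub_lt hd Nat.one_pos⟩

/-- `⟨ω̃(s), k_j⟩ = Σ_{i=1}^{d−1} ω_i(s) k_{j,i}`. -/
def Aj (d : ℕ) (ω : ℝ → Fin d → ℝ) (k : ℕ → Fin (d - 1) → ℤ) (j : ℕ) (s : ℝ) : ℝ :=
  ∑ i, ω s (emb d i) * (k j i : ℝ)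

/-- `H_n(θ, r) = ⟨ω(r_d), r⟩ − Σ_{j=2}^n φ_j(r_d) sin(2π⟨k_j, θ̃⟩)`. -/
def Hn (d n : ℕ) (hd : 0 < d) (ω : ℝ → Fin d → ℝ) (k : ℕ → Fin (d - 1) → ℤ)
    (φ : ℕ → ℝ → ℝ) (z : Phase d) : ℝ :=
  (∑ i, ω (z.2 (lst d hd)) i * z.2 i) -
    ∑ j ∈ Finset.Icc 2 n, φ j (z.2 (lst d hd)) *
      Real.sin (2 * π * ∑ i, (k j i : ℝ) * z.1 (emb d i))

/-- `H_0(θ, r) = ⟨ω(r_d), r⟩`. -/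
def H0 (d : ℕ) (hd : 0 < d) (ω : ℝ → Fin d → ℝ) (z : Phase d) : ℝ :=
  ∑ i, ω (z.2 (lst d hd)) i * z.2 i

/-- The map `Ψ_n(θ, r) = (θ̃, θ_d − (1/2π) Σ_j (d/ds)[φ_j(s)/⟨ω̃(s), k_j⟩] cos(2π⟨k_j, θ̃⟩),
r̃ − Σ_j (φ_j(s)/⟨ω̃(s), k_j⟩) sin(2π⟨k_j, θ̃⟩) k_j, s)`, with `s = r_d`. -/
def Psin (d n : ℕ) (hd : 0 < d) (ω : ℝ → Fin d → ℝ) (k : ℕ → Fin (d - 1) → ℤ)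
    (φ : ℕ → ℝ → ℝ) (z : Phase d) : Phase d :=
  (fun i => if i = lst d hd then
      z.1 (lst d hd) - (1 / (2 * π)) * ∑ j ∈ Finset.Icc 2 n,
        deriv (fun s => φ j s / Aj d ω k j s) (z.2 (lst d hd)) *
          Real.cos (2 * π * ∑ i', (k j i' : ℝ) * z.1 (emb d i'))
    else z.1 i,
   fun i => if h : (i : ℕ) < d - 1 then
      z.2 i - ∑ j ∈ Finset.Icc 2 n,
        (φ j (z.2 (lst d hd)) / Aj d ω k j (z.2 (lst d hd))) *
          Real.sin (2 * π * ∑ i', (k j i' : ℝ) * z.1 (emb d i')) * (k j ⟨i, h⟩ : ℝ)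
    else z.2 i)

/-- The time dependence `ψ_j(t)` of the explicit solution: if `⟨ω̃(s), k_j⟩ ≠ 0` it is
`[sin(2π⟨k_j, θ̃₀⟩ + 2πt⟨ω̃(s), k_j⟩) − sin(2π⟨k_j, θ̃₀⟩)]/⟨ω̃(s), k_j⟩`, and if
`⟨ω̃(s), k_j⟩ = 0` it is `2πt cos(2π⟨k_j, θ̃₀⟩)`. -/
def psiSol (d : ℕ) (ω : ℝ → Fin d → ℝ) (k : ℕ → Fin (d - 1) → ℤ)
    (θ0 : Fin d → ℝ) (s : ℝ) (j : ℕ) (t : ℝ) : ℝ :=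
  if Aj d ω k j s = 0 then
    2 * π * t * Real.cos (2 * π * ∑ i', (k j i' : ℝ) * θ0 (emb d i'))
  else
    (Real.sin (2 * π * ∑ i', (k j i' : ℝ) * θ0 (emb d i') + 2 * π * t * Aj d ω k j s) -
      Real.sin (2 * π * ∑ i', (k j i' : ℝ) * θ0 (emb d i'))) / Aj d ω k j s


/-! Since `Hn` does not depend on `θ_d`, the action `r_d` is conserved, so `ω(r_d)` and the
amplitudes `φ_j(r_d)` are frozen at `s = (r₀)_d`. Then `θ̃' = ω̃(s)` makes `θ̃` move linearly,
`r̃' = Σ_j 2π φ_j(s) cos(2π⟨k_j, θ̃(t)⟩) k_j` integrates to `Σ_j φ_j(s) ψ_j(t) k_j`, and `θ_d` is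
the integral of `∂H_n/∂r_d` along these already known coordinates. -/

theorem fderiv_add_of_forall_add_eq {𝕜 E F : Type*} [NontriviallyNormedField 𝕜]
    [NormedAddCommGroup E] [NormedSpace 𝕜 E] [NormedAddCommGroup F] [NormedSpace 𝕜 F]
    {f : E → F} {a : E} (h : ∀ x, f (x + a) = f x) (x : E) :
    fderiv 𝕜 f (x + a) = fderiv 𝕜 f x := by
  rw [← fderiv_comp_add_right]
  simp only [h]

section Coordinates

variable {d : ℕ}

lemma emb_ne_lst (hd : 0 < d) (i : Fin (d - 1)) : emb d i ≠ lst d hd := by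
  intro h
  have := congrArg Fin.val h
  simp only [emb, lst, Fin.val_castLE] at this
  omega

lemma exists_emb_eq_or_eq_lst (hd : 0 < d) (i : Fin d) :
    (∃ i', emb d i' = i) ∨ i = lst d hd := by
  by_cases h : (i : ℕ) < d - 1
  · exact Or.inl ⟨⟨i, h⟩, rfl⟩
  · exact Or.inr (Fin.ext (by simp only [lst]; omega))

/-- `⟨c, θ̃⟩`. -/
def tildePairing (d : ℕ) (c : Fin (d - 1) → ℤ) (θ : Fin d → ℝ) : ℝ :=
  ∑ i, (c i : ℝ) * θ (emb d i)

variable (c : Fin (d - 1) → ℤ)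

lemma tildePairing_add_smul (x y : Fin d → ℝ) (a : ℝ) :
    tildePairing d c (x + a • y) = tildePairing d c x + a * tildePairing d c y := by
  simp only [tildePairing, Pi.add_apply, Pi.smul_apply, smul_eq_mul, mul_add,
    Finset.sum_add_distrib, Finset.mul_sum]
  congr 1
  exact Finset.sum_congr rfl fun _ _ => by ring

lemma tildePairing_single_emb (i : Fin (d - 1)) :
    tildePairing d c (Pi.single (emb d i) 1) = c i := by
  simp [tildePairing, Pi.single_apply, emb, (Fin.castLE_injective _).eq_iff]

lemma tildePairing_congr {x y : Fin d → ℝ} (h : ∀ i, x (emb d i) = y (emb d i)) :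
    tildePairing d c x = tildePairing d c y := by
  simp only [tildePairing, h]

lemma Aj_eq_tildePairing (ω : ℝ → Fin d → ℝ) (k : ℕ → Fin (d - 1) → ℤ) (j : ℕ) (s : ℝ) :
    Aj d ω k j s = tildePairing d (k j) (ω s) := by
  simp only [Aj, tildePairing, mul_comm]

end Coordinates

section Hamiltonian

variable {d n : ℕ} (hd : 0 < d) (ω : ℝ → Fin d → ℝ) (k : ℕ → Fin (d - 1) → ℤ)
  (φ : ℕ → ℝ → ℝ)

lemma Hn_apply (θ r : Fin d → ℝ) :
    Hn d n hd ω k φ (θ, r) = (∑ m, ω (r (lst d hd)) m * r m) -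
      ∑ j ∈ Finset.Icc 2 n, φ j (r (lst d hd)) * sin (2 * π * tildePairing d (k j) θ) :=
  rfl

lemma contDiff_Hn (hω : ContDiff ℝ 1 ω) (hφ : ∀ j ∈ Finset.Icc 2 n, ContDiff ℝ 1 (φ j)) :
    ContDiff ℝ 1 (Hn d n hd ω k φ) := by
  have hω' : ∀ m, ContDiff ℝ 1 (fun s => ω s m) := fun m => contDiff_apply ℝ ℝ m |>.comp hω
  unfold Hn
  refine .sub (.sum fun m _ => .mul ((hω' m).comp (by fun_prop)) (by fun_prop))
    (.sum fun j hj => .mul ((hφ j hj).comp (by fun_prop)) (by fun_prop))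

lemma Hn_congr_theta {θ θ' : Fin d → ℝ} (h : ∀ i, θ (emb d i) = θ' (emb d i))
    (r : Fin d → ℝ) : Hn d n hd ω k φ (θ, r) = Hn d n hd ω k φ (θ', r) := by
  simp only [Hn_apply, tildePairing_congr _ h]

lemma fderiv_Hn_congr_theta {θ θ' : Fin d → ℝ} (h : ∀ i, θ (emb d i) = θ' (emb d i))
    (r : Fin d → ℝ) :
    fderiv ℝ (Hn d n hd ω k φ) (θ, r) = fderiv ℝ (Hn d n hd ω k φ) (θ', r) := by
  have htransl : ∀ z : Phase d, Hn d n hd ω k φ (z + (θ' - θ, 0)) = Hn d n hd ω k φ z :=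
    fun ⟨x, r'⟩ => by
      rw [Prod.mk_add_mk, add_zero]
      exact Hn_congr_theta hd ω k φ (fun i => by simp [h i]) r'
  simpa using (fderiv_add_of_forall_add_eq htransl (θ, r)).symm

variable (hω : ContDiff ℝ 1 ω) (hφ : ∀ j ∈ Finset.Icc 2 n, ContDiff ℝ 1 (φ j))
include hω hφ

lemma fderiv_Hn_theta_lst (θ r : Fin d → ℝ) :
    fderiv ℝ (Hn d n hd ω k φ) (θ, r) (Pi.single (lst d hd) 1, 0) = 0 := by
  refine ((contDiff_Hn hd ω k φ hω hφ).differentiable one_ne_zero _).hasFDerivAt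
    |>.hasLineDerivAt _ |>.unique ?_
  have hconst : (fun t : ℝ => Hn d n hd ω k φ ((θ, r) + t • (Pi.single (lst d hd) 1, 0)))
      = fun _ => Hn d n hd ω k φ (θ, r) := by
    funext t
    rw [Prod.smul_mk, smul_zero, Prod.mk_add_mk, add_zero]
    exact Hn_congr_theta hd ω k φ (fun i => by simp [emb_ne_lst hd i]) r
  rw [HasLineDerivAt, hconst]
  exact hasDerivAt_const _ _

lemma fderiv_Hn_theta_emb (θ r : Fin d → ℝ) (i : Fin (d - 1)) :
    fderiv ℝ (Hn d n hd ω k φ) (θ, r) (Pi.single (emb d i) 1, 0) =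
      -∑ j ∈ Finset.Icc 2 n,
        φ j (r (lst d hd)) * (cos (2 * π * tildePairing d (k j) θ) * (2 * π * k j i)) := by
  refine ((contDiff_Hn hd ω k φ hω hφ).differentiable one_ne_zero _).hasFDerivAt
    |>.hasLineDerivAt _ |>.unique ?_
  simp only [HasLineDerivAt, Prod.smul_mk, smul_zero, Prod.mk_add_mk, add_zero, Hn_apply,
    tildePairing_add_smul, tildePairing_single_emb]
  refine .const_sub _ (.fun_sum fun j _ => .const_mul _ ?_)
  have hphase : HasDerivAt (fun t : ℝ => 2 * π * (tildePairing d (k j) θ + t * k j i))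
      (2 * π * k j i) 0 := by
    simpa using ((hasDerivAt_id (0 : ℝ)).mul_const (k j i : ℝ)).const_add _ |>.const_mul (2 * π)
  simpa using hphase.sin

lemma fderiv_Hn_r_emb (θ r : Fin d → ℝ) (i : Fin (d - 1)) :
    fderiv ℝ (Hn d n hd ω k φ) (θ, r) (0, Pi.single (emb d i) 1) = ω (r (lst d hd)) (emb d i) := by
  refine ((contDiff_Hn hd ω k φ hω hφ).differentiable one_ne_zero _).hasFDerivAt
    |>.hasLineDerivAt _ |>.unique ?_
  have hline : (fun t : ℝ => Hn d n hd ω k φ ((θ, r) + t • (0, Pi.single (emb d i) 1)))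
      = fun t => Hn d n hd ω k φ (θ, r) + t * ω (r (lst d hd)) (emb d i) := by
    funext t
    have hlst : (r + t • Pi.single (emb d i) 1 : Fin d → ℝ) (lst d hd) = r (lst d hd) := by
      simp [(emb_ne_lst hd i).symm]
    rw [Prod.smul_mk, smul_zero, Prod.mk_add_mk, add_zero, Hn_apply, Hn_apply, hlst]
    simp only [Pi.add_apply, Pi.smul_apply, Pi.single_apply, smul_eq_mul, mul_ite, mul_one,
      mul_zero, mul_add, Finset.sum_add_distrib, Finset.sum_ite_eq', Finset.mem_univ, if_true]
    ring
  rw [HasLineDerivAt, hline]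
  simpa using ((hasDerivAt_id (0 : ℝ)).mul_const (ω (r (lst d hd)) (emb d i))).const_add
    (Hn d n hd ω k φ (θ, r))

end Hamiltonian

section PsiSol

variable {d : ℕ} (ω : ℝ → Fin d → ℝ) (k : ℕ → Fin (d - 1) → ℤ) (θ0 : Fin d → ℝ)

lemma psiSol_zero (s : ℝ) (j : ℕ) : psiSol d ω k θ0 s j 0 = 0 := by
  by_cases hA : Aj d ω k j s = 0 <;> simp [psiSol, hA]

lemma hasDerivAt_psiSol (s : ℝ) (j : ℕ) (t : ℝ) :
    HasDerivAt (psiSol d ω k θ0 s j)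
      (2 * π * cos (2 * π * (tildePairing d (k j) θ0 + t * Aj d ω k j s))) t := by
  by_cases hA : Aj d ω k j s = 0
  · have hψ : psiSol d ω k θ0 s j = fun u => 2 * π * u * cos (2 * π * tildePairing d (k j) θ0) :=
      funext fun _ => if_pos hA
    rw [hψ, hA]
    simpa using ((hasDerivAt_id t).const_mul (2 * π)).mul_const
      (cos (2 * π * tildePairing d (k j) θ0))
  · have hψ : psiSol d ω k θ0 s j = fun u =>
        (sin (2 * π * tildePairing d (k j) θ0 + 2 * π * u * Aj d ω k j s) -
          sin (2 * π * tildePairing d (k j) θ0)) / Aj d ω k j s :=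
      funext fun _ => if_neg hA
    have hphase : HasDerivAt
        (fun u => 2 * π * tildePairing d (k j) θ0 + 2 * π * u * Aj d ω k j s)
        (2 * π * Aj d ω k j s) t := by
      simpa using (((hasDerivAt_id t).const_mul (2 * π)).mul_const (Aj d ω k j s)).const_add
        (2 * π * tildePairing d (k j) θ0)
    have hval : cos (2 * π * tildePairing d (k j) θ0 + 2 * π * t * Aj d ω k j s) *
        (2 * π * Aj d ω k j s) / Aj d ω k j s =
          2 * π * cos (2 * π * (tildePairing d (k j) θ0 + t * Aj d ω k j s)) := by
      rw [mul_add, ← mul_assoc]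
      field_simp
    rw [hψ, ← hval]
    exact (hphase.sin.sub_const _).div_const _

end PsiSol

section Solution

variable {d n : ℕ} (hd : 0 < d) (ω : ℝ → Fin d → ℝ) (k : ℕ → Fin (d - 1) → ℤ)
  (φ : ℕ → ℝ → ℝ) (θ0 r0 : Fin d → ℝ)

def rSol (d n : ℕ) (hd : 0 < d) (ω : ℝ → Fin d → ℝ) (k : ℕ → Fin (d - 1) → ℤ)
    (φ : ℕ → ℝ → ℝ) (θ0 r0 : Fin d → ℝ) (t : ℝ) (i : Fin d) : ℝ :=
  if h : (i : ℕ) < d - 1 then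
    r0 i + ∑ j ∈ Finset.Icc 2 n,
      φ j (r0 (lst d hd)) * psiSol d ω k θ0 (r0 (lst d hd)) j t * k j ⟨i, h⟩
  else r0 i

lemma rSol_emb (t : ℝ) (i : Fin (d - 1)) :
    rSol d n hd ω k φ θ0 r0 t (emb d i) = r0 (emb d i) + ∑ j ∈ Finset.Icc 2 n,
      φ j (r0 (lst d hd)) * psiSol d ω k θ0 (r0 (lst d hd)) j t * k j i :=
  dif_pos i.2

lemma rSol_lst (t : ℝ) : rSol d n hd ω k φ θ0 r0 t (lst d hd) = r0 (lst d hd) :=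
  dif_neg (by simp [lst])

lemma rSol_zero : rSol d n hd ω k φ θ0 r0 0 = r0 := by
  funext i
  by_cases h : (i : ℕ) < d - 1 <;> simp [rSol, h, psiSol_zero]

lemma hasDerivAt_rSol_emb (t : ℝ) (i : Fin (d - 1)) :
    HasDerivAt (fun u => rSol d n hd ω k φ θ0 r0 u (emb d i))
      (∑ j ∈ Finset.Icc 2 n, φ j (r0 (lst d hd)) *
        (cos (2 * π * (tildePairing d (k j) θ0 + t * Aj d ω k j (r0 (lst d hd)))) *
          (2 * π * k j i))) t := by
  simp only [rSol_emb]
  exact .const_add _ (.fun_sum fun j _ =>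
    ((hasDerivAt_psiSol ω k θ0 _ j t).const_mul _ |>.mul_const _).congr_deriv (by ring))

lemma continuous_rSol : Continuous (rSol d n hd ω k φ θ0 r0) := by
  refine continuous_pi fun i => ?_
  rcases exists_emb_eq_or_eq_lst hd i with ⟨i, rfl⟩ | rfl
  · exact continuous_iff_continuousAt.2 fun t =>
      (hasDerivAt_rSol_emb hd ω k φ θ0 r0 t i).continuousAt
  · simpa only [rSol_lst] using continuous_const

/-- The velocity of `θ_d` is evaluated along the straight line `θ₀ + u ω(s)` rather than along
the solution itself; this is legitimate because `Hn` ignores `θ_d` (`fderiv_Hn_congr_theta`), and it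
makes the definition explicit. -/
def thetaSol (d n : ℕ) (hd : 0 < d) (ω : ℝ → Fin d → ℝ) (k : ℕ → Fin (d - 1) → ℤ)
    (φ : ℕ → ℝ → ℝ) (θ0 r0 : Fin d → ℝ) (t : ℝ) : Fin d → ℝ :=
  Function.update (θ0 + t • ω (r0 (lst d hd))) (lst d hd)
    (θ0 (lst d hd) + ∫ u in (0 : ℝ)..t, fderiv ℝ (Hn d n hd ω k φ)
      (θ0 + u • ω (r0 (lst d hd)), rSol d n hd ω k φ θ0 r0 u) (0, Pi.single (lst d hd) 1))

lemma thetaSol_emb (t : ℝ) (i : Fin (d - 1)) :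
    thetaSol d n hd ω k φ θ0 r0 t (emb d i) = θ0 (emb d i) + t * ω (r0 (lst d hd)) (emb d i) :=
  Function.update_of_ne (emb_ne_lst hd i) _ _

lemma thetaSol_zero : thetaSol d n hd ω k φ θ0 r0 0 = θ0 := by
  simp [thetaSol]

lemma tildePairing_thetaSol (t : ℝ) (j : ℕ) :
    tildePairing d (k j) (thetaSol d n hd ω k φ θ0 r0 t) =
      tildePairing d (k j) θ0 + t * Aj d ω k j (r0 (lst d hd)) := by
  rw [tildePairing_congr (y := θ0 + t • ω (r0 (lst d hd))) _
    (fun i => thetaSol_emb hd ω k φ θ0 r0 t i), tildePairing_add_smul, Aj_eq_tildePairing]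

variable (hω : ContDiff ℝ 1 ω) (hφ : ∀ j ∈ Finset.Icc 2 n, ContDiff ℝ 1 (φ j))
include hω hφ

lemma hasDerivAt_thetaSol_lst (t : ℝ) :
    HasDerivAt (fun u => thetaSol d n hd ω k φ θ0 r0 u (lst d hd))
      (fderiv ℝ (Hn d n hd ω k φ) (thetaSol d n hd ω k φ θ0 r0 t, rSol d n hd ω k φ θ0 r0 t)
        (0, Pi.single (lst d hd) 1)) t := by
  have hrate : Continuous fun u => fderiv ℝ (Hn d n hd ω k φ)
      (θ0 + u • ω (r0 (lst d hd)), rSol d n hd ω k φ θ0 r0 u) (0, Pi.single (lst d hd) 1) :=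
    ((contDiff_Hn hd ω k φ hω hφ).continuous_fderiv one_ne_zero).comp
      ((by fun_prop : Continuous fun u : ℝ => θ0 + u • ω (r0 (lst d hd))).prodMk
        (continuous_rSol hd ω k φ θ0 r0)) |>.clm_apply continuous_const
  rw [fderiv_Hn_congr_theta (θ' := θ0 + t • ω (r0 (lst d hd))) hd ω k φ
    (fun i => thetaSol_emb hd ω k φ θ0 r0 t i)]
  simp only [thetaSol, Function.update_self]
  exact .const_add _ (intervalIntegral.integral_hasDerivAt_right (hrate.intervalIntegrable _ _)
    (hrate.stronglyMeasurableAtFilter _ _) hrate.continuousAt)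

theorem isSolutionOn_thetaSol_rSol :
    IsSolutionOn (Hn d n hd ω k φ) (thetaSol d n hd ω k φ θ0 r0) (rSol d n hd ω k φ θ0 r0)
      Set.univ := by
  intro t _ i
  rcases exists_emb_eq_or_eq_lst hd i with ⟨i, rfl⟩ | rfl
  · refine ⟨?_, ?_⟩
    · rw [fderiv_Hn_r_emb hd ω k φ hω hφ, rSol_lst]
      simp only [thetaSol_emb]
      exact ((hasDerivAt_mul_const _).const_add _).hasDerivWithinAt
    · rw [fderiv_Hn_theta_emb hd ω k φ hω hφ, neg_neg, rSol_lst]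
      simp only [tildePairing_thetaSol]
      exact (hasDerivAt_rSol_emb hd ω k φ θ0 r0 t i).hasDerivWithinAt
  · refine ⟨(hasDerivAt_thetaSol_lst hd ω k φ θ0 r0 hω hφ t).hasDerivWithinAt, ?_⟩
    rw [fderiv_Hn_theta_lst hd ω k φ hω hφ, neg_zero]
    simp only [rSol_lst]
    exact hasDerivWithinAt_const _ _ _

end Solution

/-- The solution of Hamilton's equations for `H_n` with initial
condition `(θ₀, r₀)` is defined for all `t ∈ ℝ` and satisfies
`θ̃(t) = θ̃₀ + t ω̃(s)`, `r_d(t) = s` and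
`r̃(t) = r̃₀ + Σ_{j=2}^n φ_j(s) ψ_j(t) k_j`, where `s = (r₀)_d`. -/
theorem statement17 (d n : ℕ) (hd : 2 ≤ d)
    (ω : ℝ → Fin d → ℝ) (hω : ContDiff ℝ 1 ω)
    (k : ℕ → Fin (d - 1) → ℤ)
    (φ : ℕ → ℝ → ℝ) (hφ : ∀ j ∈ Finset.Icc 2 n, ContDiff ℝ 1 (φ j))
    (θ0 r0 : Fin d → ℝ) :
    ∃ θ r : ℝ → Fin d → ℝ,
      IsSolutionOn (Hn d n (by omega) ω k φ) θ r Set.univ ∧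
      θ 0 = θ0 ∧ r 0 = r0 ∧
      (∀ t : ℝ, ∀ i : Fin (d - 1),
        θ t (emb d i) = θ0 (emb d i) + t * ω (r0 (lst d (by omega))) (emb d i)) ∧
      (∀ t : ℝ, r t (lst d (by omega)) = r0 (lst d (by omega))) ∧
      (∀ t : ℝ, ∀ i : Fin (d - 1),
        r t (emb d i) = r0 (emb d i) + ∑ j ∈ Finset.Icc 2 n,
          φ j (r0 (lst d (by omega))) *
            psiSol d ω k θ0 (r0 (lst d (by omega))) j t * (k j i : ℝ)) := by
  have hd0 : 0 < d := by omega
  exact ⟨thetaSol d n hd0 ω k φ θ0 r0, rSol d n hd0 ω k φ θ0 r0,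
    isSolutionOn_thetaSol_rSol hd0 ω k φ θ0 r0 hω hφ,
    thetaSol_zero hd0 ω k φ θ0 r0, rSol_zero hd0 ω k φ θ0 r0,
    thetaSol_emb hd0 ω k φ θ0 r0, rSol_lst hd0 ω k φ θ0 r0, rSol_emb hd0 ω k φ θ0 r0⟩
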